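/- arXiv:0709.0967 — 3 statements merged into one kernel-verified Lean document; each statement's English description precedes it below -/
import Mathlib

section
/- Let 0 < ξ < 1/2 and 0 ≤ P ≤ 1/2 - ξ/2. If m ≥ 0 and d are integers with d ≥ m + (2/ξ²)·log(2^(m+1)/ξ), and h is an integer with h ≥ (d-m)/2, then (1/2 - ξ) + 2^m · (4P(1-P))^h ≤ 1/2 - ξ/2. -/
theorem stmt_2 (ξ P : ℝ) (h0 : 0 < ξ) (h1 : ξ < 1/2)
    (hP0 : 0 ≤ P) (hP1 : P ≤ 1/2 - ξ/2)
    (m d h : ℤ) (hm : 0 ≤ m)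
    (hd : (d : ℝ) ≥ (m : ℝ) + (2 / ξ^2) * Real.log ((2:ℝ)^(m+1) / ξ))
    (hh : (h : ℝ) ≥ ((d : ℝ) - (m : ℝ)) / 2) :
    (1/2 - ξ) + (2:ℝ)^m * (4 * P * (1 - P)) ^ (h : ℝ) ≤ 1/2 - ξ/2 := by
  have hA : (0:ℝ) < (2:ℝ)^m := zpow_pos (by norm_num) m
  have hA1 : (0:ℝ) < (2:ℝ)^(m+1) := zpow_pos (by norm_num) (m+1)
  have hξ2 : (0:ℝ) < ξ^2 := by positivity
  have hb0 : (0:ℝ) ≤ 4*P*(1-P) := by nlinarith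
  have hb : 4*P*(1-P) ≤ 1 - ξ^2 := by nlinarith
  have h1ξ : (0:ℝ) < 1 - ξ^2 := by nlinarith
  have h2big : (2:ℝ) ≤ (2:ℝ)^(m+1) := by
    calc (2:ℝ) = (2:ℝ)^(1:ℤ) := by norm_num
    _ ≤ (2:ℝ)^(m+1) := by
        apply zpow_le_zpow_right₀ (by norm_num) (by omega)
  have hlogpos : 0 < Real.log ((2:ℝ)^(m+1)/ξ) := by
    apply Real.log_pos
    rw [lt_div_iff₀ h0]
    nlinarith
  have hkey : Real.log ((2:ℝ)^(m+1)/ξ) ≤ ξ^2 * h := by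
    set L := Real.log ((2:ℝ)^(m+1)/ξ) with hL
    have h2 : (2/ξ^2) * L ≤ 2*(h:ℝ) := by linarith
    have h3 : (2/ξ^2)*L*ξ^2 = 2*L := by field_simp
    have h4 := mul_le_mul_of_nonneg_right h2 hξ2.le
    rw [h3] at h4
    nlinarith
  have hh0 : (0:ℝ) ≤ (h:ℝ) := by nlinarith
  have step1 : (4*P*(1-P)) ^ (h:ℝ) ≤ (1-ξ^2) ^ (h:ℝ) :=
    Real.rpow_le_rpow hb0 hb hh0
  have step2 : (1-ξ^2) ^ (h:ℝ) ≤ Real.exp (-(ξ^2) * h) := by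
    calc (1-ξ^2)^(h:ℝ) = Real.exp (Real.log (1-ξ^2) * h) := by
          exact Real.rpow_def_of_pos h1ξ _
    _ ≤ Real.exp (-(ξ^2) * h) := by
        apply Real.exp_le_exp.mpr
        have hl : Real.log (1-ξ^2) ≤ -(ξ^2) := by
          have := Real.log_le_sub_one_of_pos h1ξ
          linarith
        exact mul_le_mul_of_nonneg_right hl hh0
  have step3 : Real.exp (-(ξ^2) * h) ≤ ξ / (2:ℝ)^(m+1) := by
    have : Real.exp (-(ξ^2) * h) ≤ Real.exp (-(Real.log ((2:ℝ)^(m+1)/ξ))) := by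
      apply Real.exp_le_exp.mpr; linarith
    calc Real.exp (-(ξ^2) * h) ≤ Real.exp (-(Real.log ((2:ℝ)^(m+1)/ξ))) := this
    _ = ξ / (2:ℝ)^(m+1) := by
        rw [Real.exp_neg, Real.exp_log (by positivity), inv_div]
  have hfin : (2:ℝ)^m * (4 * P * (1 - P)) ^ (h:ℝ) ≤ ξ/2 := by
    have hle : (2:ℝ)^m * (4 * P * (1 - P)) ^ (h:ℝ) ≤ (2:ℝ)^m * (ξ / (2:ℝ)^(m+1)) := by
      apply mul_le_mul_of_nonneg_left _ (le_of_lt hA)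
      exact le_trans step1 (le_trans step2 step3)
    have heq : (2:ℝ)^m * (ξ / (2:ℝ)^(m+1)) = ξ/2 := by
      rw [zpow_add₀ (by norm_num : (2:ℝ) ≠ 0) m 1]
      field_simp
    linarith [hle, heq ▸ hle]
  linarith
end

section
/- Define the sequence P₀ = 0, P_{t+1} = ε + 2^m · (4 P_t (1 - P_t))^{(d-m)/2}, where ε = 1/2 - ξ, 0 < ξ < 1/2, m ≥ 0 an integer, and d an integer with d ≥ m + (2/ξ²) log(2^{m+1}/ξ) and d > m. Then P_t ≤ 1/2 - ξ/2 for all t ≥ 0. -/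
theorem stmt_6 (ξ : ℝ) (h0 : 0 < ξ) (h1 : ξ < 1/2) (m d : ℤ) (hm : 0 ≤ m)
    (hdm : m < d)
    (hd : (d : ℝ) ≥ (m : ℝ) + (2 / ξ^2) * Real.log ((2:ℝ)^(m+1) / ξ))
    (P : ℕ → ℝ) (hP0 : P 0 = 0)
    (hPrec : ∀ t, P (t+1) = (1/2 - ξ) + (2:ℝ)^m * (4 * P t * (1 - P t)) ^ (((d:ℝ) - (m:ℝ)) / 2)) :
    ∀ t, P t ≤ 1/2 - ξ/2 := by
  set e : ℝ := ((d:ℝ) - (m:ℝ)) / 2 with he_def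
  have he : 0 < e := by
    have : (m:ℝ) < (d:ℝ) := by exact_mod_cast hdm
    simp only [he_def]; linarith
  have h2m : (0:ℝ) < (2:ℝ)^m := zpow_pos (by norm_num) _
  have h2m1 : (0:ℝ) < (2:ℝ)^(m+1) := zpow_pos (by norm_num) _
  have hξ2 : (0:ℝ) < ξ^2 := by positivity
  -- exp bound
  have hLB : ξ^2 * e ≥ Real.log ((2:ℝ)^(m+1) / ξ) := by
    have h' : (d:ℝ) - (m:ℝ) ≥ (2/ξ^2) * Real.log ((2:ℝ)^(m+1) / ξ) := by linarith
    have := mul_le_mul_of_nonneg_left h' (le_of_lt hξ2)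
    rw [he_def]
    field_simp at this ⊢
    linarith
  have key : ∀ t, 0 ≤ P t ∧ P t ≤ 1/2 - ξ/2 := by
    intro t
    induction t with
    | zero => rw [hP0]; constructor <;> linarith
    | succ t ih =>
      obtain ⟨hlo, hhi⟩ := ih
      have hbase : 0 ≤ 4 * P t * (1 - P t) := by nlinarith
      have hbase' : 4 * P t * (1 - P t) ≤ 1 - ξ^2 := by nlinarith
      have h1m : (0:ℝ) < 1 - ξ^2 := by nlinarith
      have hpow : (4 * P t * (1 - P t)) ^ e ≤ (1 - ξ^2) ^ e :=
        Real.rpow_le_rpow hbase hbase' he.le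
      have hlog : Real.log (1 - ξ^2) ≤ -ξ^2 := by
        have := Real.log_le_sub_one_of_pos h1m
        linarith
      have hexp : (1 - ξ^2) ^ e ≤ Real.exp (-(ξ^2) * e) := by
        rw [Real.rpow_def_of_pos h1m]
        exact Real.exp_le_exp.mpr (mul_le_mul_of_nonneg_right hlog he.le)
      have hfin : Real.exp (-(ξ^2) * e) ≤ ξ / (2:ℝ)^(m+1) := by
        rw [← Real.exp_log (div_pos h0 h2m1)]
        apply Real.exp_le_exp.mpr
        rw [Real.log_div (ne_of_gt h0) (ne_of_gt h2m1)]
        rw [Real.log_div (ne_of_gt h2m1) (ne_of_gt h0)] at hLB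
        linarith
      have hchain : (4 * P t * (1 - P t)) ^ e ≤ ξ / (2:ℝ)^(m+1) := by
        linarith
      have hmul : (2:ℝ)^m * (ξ / (2:ℝ)^(m+1)) = ξ / 2 := by
        rw [zpow_add₀ (by norm_num : (2:ℝ) ≠ 0)]
        field_simp
      have hpos : 0 ≤ (4 * P t * (1 - P t)) ^ e := Real.rpow_nonneg hbase e
      rw [hPrec t]
      constructor
      · have : 0 ≤ (2:ℝ)^m * (4 * P t * (1 - P t)) ^ e := by positivity
        linarith
      · have := mul_le_mul_of_nonneg_left hchain h2m.le
        rw [hmul] at this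
        linarith
  exact fun t => (key t).2
end

section
/- Consider the Markov chain on [0,1] defined by one step of the map f(P) = min(1, ε + ∑_{k=h}^{d} C(d,k) P^k (1-P)^{d-k}) with ε = 1/2 - ξ, 0 < ξ < 1/2, d ≥ h ≥ (d-m)/2 for an integer m ≥ 0, and d ≥ m + (2/ξ²) log(2^{m+1}/ξ). Then the interval [0, 1/2 - ξ/2] is invariant under f: if P ≤ 1/2 - ξ/2 then f(P) ≤ 1/2 - ξ/2. -/
theorem stmt_16 (ξ : ℝ) (h0 : 0 < ξ) (h1 : ξ < 1/2) (d h m : ℕ)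
    (hhd : h ≤ d) (hh : ((h : ℝ)) ≥ ((d : ℝ) - (m : ℝ)) / 2)
    (hd : (d : ℝ) ≥ (m : ℝ) + (2 / ξ^2) * Real.log ((2:ℝ)^(m+1) / ξ))
    (P : ℝ) (hP0 : 0 ≤ P) (hP1 : P ≤ 1/2 - ξ/2) :
    min 1 ((1/2 - ξ) + ∑ k ∈ Finset.Icc h d, (d.choose k : ℝ) * P^k * (1 - P)^(d - k))
      ≤ 1/2 - ξ/2 := by
  have hξ2 : (0:ℝ) < ξ^2 := by positivity
  have h1ξ : (0:ℝ) < 1 - ξ := by linarith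
  have h1ξ' : (0:ℝ) < 1 + ξ := by linarith
  set lam : ℝ := (1+ξ)/(1-ξ) with hlam_def
  have hlam1 : 1 ≤ lam := by
    rw [hlam_def, le_div_iff₀ h1ξ]; linarith
  have hlam0 : 0 < lam := lt_of_lt_of_le one_pos hlam1
  have hP1' : P ≤ (1-ξ)/2 := by linarith
  have h1P : 0 ≤ 1 - P := by linarith
  set S := ∑ k ∈ Finset.Icc h d, (d.choose k : ℝ) * P^k * (1 - P)^(d - k) with hS
  -- Step 1: Chernoff bound
  have hstep1 : lam^h * S ≤ (1+ξ)^d := by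
    have e1 : lam^h * S ≤ ∑ k ∈ Finset.Icc h d,
        (d.choose k : ℝ) * (lam*P)^k * (1 - P)^(d - k) := by
      rw [hS, Finset.mul_sum]
      apply Finset.sum_le_sum
      intro k hk
      have hk' := (Finset.mem_Icc.mp hk).1
      have hle : lam^h ≤ lam^k := pow_le_pow_right₀ hlam1 hk'
      have h0' : 0 ≤ (d.choose k : ℝ) * P^k * (1-P)^(d-k) := by positivity
      calc lam^h * ((d.choose k : ℝ) * P^k * (1-P)^(d-k))
          ≤ lam^k * ((d.choose k : ℝ) * P^k * (1-P)^(d-k)) :=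
            mul_le_mul_of_nonneg_right hle h0'
        _ = (d.choose k : ℝ) * (lam*P)^k * (1-P)^(d-k) := by
            rw [mul_pow]; ring
    have e2 : ∑ k ∈ Finset.Icc h d, (d.choose k : ℝ) * (lam*P)^k * (1 - P)^(d - k)
        ≤ ∑ k ∈ Finset.range (d+1), (d.choose k : ℝ) * (lam*P)^k * (1 - P)^(d - k) := by
      apply Finset.sum_le_sum_of_subset_of_nonneg
      · intro k hk
        simp only [Finset.mem_Icc, Finset.mem_range] at *
        omega
      · intro k _ _
        positivity
    have e3 : ∑ k ∈ Finset.range (d+1), (d.choose k : ℝ) * (lam*P)^k * (1 - P)^(d - k)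
        = (lam*P + (1-P))^d := by
      rw [add_pow]
      apply Finset.sum_congr rfl
      intro k _
      ring
    have e4 : (lam*P + (1-P))^d ≤ (1+ξ)^d := by
      apply pow_le_pow_left₀
      · nlinarith
      · have hkey : (lam - 1) * (1-ξ) = 2*ξ := by
          rw [hlam_def]; field_simp; ring
        nlinarith [mul_le_mul_of_nonneg_left hP1' (by linarith : (0:ℝ) ≤ lam - 1)]
    linarith
  have hSle : S ≤ (1+ξ)^d / lam^h := by
    rw [le_div_iff₀ (pow_pos hlam0 h)]
    linarith [hstep1, mul_comm (lam^h) S]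
  -- Step 2: bound (1+ξ)^d / lam^h
  have hne1 : (1-ξ:ℝ) ≠ 0 := ne_of_gt h1ξ
  have hne2 : (1+ξ:ℝ) ≠ 0 := ne_of_gt h1ξ'
  have key : (1+ξ)^d / lam^h = (1-ξ^2)^h * ((1+ξ:ℝ) ^ ((d:ℝ) - 2*(h:ℝ))) := by
    rw [Real.rpow_sub h1ξ', Real.rpow_natCast,
        show ((2:ℝ)*(h:ℝ)) = ((2*h:ℕ):ℝ) by push_cast; ring, Real.rpow_natCast,
        show (1-ξ^2 : ℝ) = (1-ξ)*(1+ξ) by ring, mul_pow, pow_mul, hlam_def, div_pow]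
    field_simp
    rw [sq, mul_pow]
    ring
  have b1 : (1-ξ^2)^h ≤ Real.exp (-(ξ^2 * h)) := by
    have hb : (1-ξ^2 : ℝ) ≤ Real.exp (-(ξ^2)) := by
      have := Real.add_one_le_exp (-(ξ^2))
      linarith
    have hb0 : (0:ℝ) ≤ 1 - ξ^2 := by nlinarith
    calc (1-ξ^2)^h ≤ (Real.exp (-(ξ^2)))^h := pow_le_pow_left₀ hb0 hb h
      _ = Real.exp (-(ξ^2 * h)) := by
          rw [← Real.exp_nat_mul]; ring_nf
  have b2 : (1+ξ:ℝ) ^ ((d:ℝ) - 2*(h:ℝ)) ≤ 2^m := by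
    have hexp : (d:ℝ) - 2*(h:ℝ) ≤ (m:ℝ) := by linarith
    calc (1+ξ:ℝ) ^ ((d:ℝ) - 2*(h:ℝ)) ≤ (1+ξ:ℝ) ^ ((m:ℕ):ℝ) :=
          Real.rpow_le_rpow_of_exponent_le (by linarith) hexp
      _ = (1+ξ:ℝ)^(m:ℕ) := Real.rpow_natCast _ m
      _ ≤ 2^m := pow_le_pow_left₀ (by linarith) (by linarith) m
  -- Step 3: exponential bound from hd
  have hL : Real.log ((2:ℝ)^(m+1)/ξ) ≤ ξ^2 * h := by
    set L := Real.log ((2:ℝ)^(m+1)/ξ) with hLdef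
    have h5 : (2/ξ^2) * L ≤ (d:ℝ) - m := by linarith
    have h5' : 2*L ≤ ((d:ℝ)-m)*ξ^2 := by
      rw [div_mul_eq_mul_div, div_le_iff₀ hξ2] at h5
      linarith
    have h6 : ξ^2 * (((d:ℝ)-↑m)/2) ≤ ξ^2 * ↑h :=
      mul_le_mul_of_nonneg_left hh (le_of_lt hξ2)
    linarith [h6, h5']
  have hexp_le : Real.exp (-(ξ^2*h)) ≤ ξ / 2^(m+1) := by
    rw [show ξ/2^(m+1) = Real.exp (Real.log (ξ/2^(m+1))) from
        (Real.exp_log (by positivity)).symm]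
    apply Real.exp_le_exp.mpr
    have hlog : Real.log (ξ/2^(m+1)) = - Real.log ((2:ℝ)^(m+1)/ξ) := by
      rw [← Real.log_inv]
      congr 1
      field_simp
    rw [hlog]
    linarith
  have hSfinal : S ≤ ξ/2 := by
    have c1 : (1+ξ)^d / lam^h ≤ Real.exp (-(ξ^2*h)) * 2^m := by
      rw [key]
      apply mul_le_mul b1 b2 (by positivity) (by positivity)
    have c2 : Real.exp (-(ξ^2*h)) * 2^m ≤ (ξ/2^(m+1)) * 2^m :=
      mul_le_mul_of_nonneg_right hexp_le (by positivity)
    have c3 : (ξ/2^(m+1)) * (2:ℝ)^m = ξ/2 := by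
      rw [pow_succ]
      field_simp
    linarith
  calc min 1 ((1/2 - ξ) + S) ≤ (1/2 - ξ) + S := min_le_right _ _
    _ ≤ 1/2 - ξ/2 := by linarith
end
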